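/- arXiv:1305.1594 — 5 statements merged into one kernel-verified Lean document; each statement's English description precedes it below -/
import Mathlib

section
/- Suppose either (principal series case) that not all c_j equal 0 and not all c_j equal p−1, and set 𝒫 := 𝒫^{PS} and J_base := ∅; or (regular cuspidal case) that 0 < c_i < p−1 for some i ∈ S, and set 𝒫 := 𝒫^{cusp} and J_base := {i, i+1, …, f−1} for such an i. Define ι(J) := J △ J_base. Then for any subsets J ⊆ J' ⊆ S with ι(J) ∈ 𝒫 and ι(J') ∈ 𝒫, there exists a chain J = J_0 ⊊ J_1 ⊊ ⋯ ⊊ J_{|J'|−|J|} = J' of subsets of S with |J_m| = m + |J| and ι(J_m) ∈ 𝒫 for every m. -/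
/-!
Write `x_j` for the statement `j ∈ K`. After untwisting by `J_base`, the condition at `j` is
either empty or a single implication between a literal of `x_j` and one of `x_{j-1}`. Inserting
`x ∈ J' \ J` into `J`, with `J ⊂ J'` both admissible, can only break an implication
`x_x → x_{x-1}` or `x_x → x_{x+1}`, and then that neighbour again lies in `J' \ J`. If every
`x ∈ J' \ J` were blocked, one could follow these implications in a fixed direction all the way
around the cycle `ℤ/f`; this forces every digit `c_j` into a degenerate configuration excluded
by the hypotheses.
-/

open scoped symmDiff

/-- The collection `Pfam^{PS}` of subsets of `S = ℤ/f` (indices taken cyclically) attached to the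
digits `c_j` in the principal series case:  those `J` such that `j ∈ J, j-1 ∉ J ⇒ c_j ≠ p-1`,
and `j ∉ J, j-1 ∈ J ⇒ c_j ≠ 0`. -/
def PPS (p f : ℕ) (c : ZMod f → ℕ) : Set (Finset (ZMod f)) :=
  {J | ∀ j : ZMod f, (j ∈ J → j - 1 ∉ J → c j ≠ p - 1) ∧ (j ∉ J → j - 1 ∈ J → c j ≠ 0)}

/-- The collection `Pfam^{cusp}` of subsets of `S = ℤ/f` attached to the digits `c_j` in the
cuspidal case: with `J₀ := J ∆ {f-1}`, those `J` such that `j ∈ J, j-1 ∉ J₀ ⇒ c_j ≠ p-1`,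
and `j ∉ J, j-1 ∈ J₀ ⇒ c_j ≠ 0`. -/
def Pcusp (p f : ℕ) (c : ZMod f → ℕ) : Set (Finset (ZMod f)) :=
  {J | ∀ j : ZMod f,
    (j ∈ J → j - 1 ∉ J ∆ ({-1} : Finset (ZMod f)) → c j ≠ p - 1) ∧
    (j ∉ J → j - 1 ∈ J ∆ ({-1} : Finset (ZMod f)) → c j ≠ 0)}

namespace Finset

variable {α : Type*} [DecidableEq α]

theorem mem_sdiff_of_not_mem_iff {K K' : Finset α} {a : α} (h : K ⊆ K')
    (ha : ¬ (a ∈ K ↔ a ∈ K')) : a ∈ K' \ K := by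
  have := @h a
  rw [mem_sdiff]
  tauto

theorem exists_chain_of_exists_insert (P : Finset α → Prop)
    (hstep : ∀ J J', J ⊂ J' → P J → P J' → ∃ x ∈ J' \ J, P (insert x J))
    {J J' : Finset α} (hJJ' : J ⊆ J') (hJ : P J) (hJ' : P J') :
    ∃ chain : ℕ → Finset α,
      chain 0 = J ∧ chain (#J' - #J) = J' ∧
      (∀ m ≤ #J' - #J, #(chain m) = m + #J ∧ P (chain m)) ∧
      ∀ m < #J' - #J, chain m ⊂ chain (m + 1) := by
  suffices ∀ n J, J ⊆ J' → P J → #J' - #J = n → ∃ chain : ℕ → Finset α,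
      chain 0 = J ∧ chain n = J' ∧ (∀ m ≤ n, #(chain m) = m + #J ∧ P (chain m)) ∧
      ∀ m < n, chain m ⊂ chain (m + 1) from this _ J hJJ' hJ rfl
  intro n
  induction n with
  | zero =>
    intro J hJJ' hJ hn
    obtain rfl : J = J' := eq_of_subset_of_card_le hJJ' (by omega)
    refine ⟨fun _ => J, rfl, rfl, fun m hm => ?_, fun m hm => by omega⟩
    obtain rfl : m = 0 := by omega
    exact ⟨by simp, hJ⟩
  | succ n ih =>
    intro J hJJ' hJ hn
    have hss : J ⊂ J' := ssubset_iff_subset_ne.mpr ⟨hJJ', by rintro rfl; simp at hn⟩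
    obtain ⟨x, hx, hPx⟩ := hstep J J' hss hJ hJ'
    have hxJ := (mem_sdiff.mp hx).2
    have hcard := card_insert_of_notMem hxJ
    obtain ⟨chain, h0, hlast, hmem, hlt⟩ :=
      ih (insert x J) (insert_subset (mem_sdiff.mp hx).1 hJJ') hPx (by omega)
    refine ⟨fun m => if m = 0 then J else chain (m - 1), by simp, by simpa using hlast,
      fun m hm => ?_, fun m hm => ?_⟩
    · rcases m with _ | m
      · simpa using hJ
      · have := hmem m (by omega)
        simp only [add_eq_zero, one_ne_zero, and_false, if_false, add_tsub_cancel_right]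
        exact ⟨by omega, this.2⟩
    · rcases m with _ | m
      · simpa [h0] using ssubset_insert hxJ
      · simpa using hlt m (by omega)

end Finset

open Finset

namespace ZMod

variable {f : ℕ} [NeZero f]

theorem forall_of_imp_add_one {P : ZMod f → Prop} (hstep : ∀ x, P x → P (x + 1)) {x₀ : ZMod f}
    (h₀ : P x₀) (y : ZMod f) : P y := by
  have hP : ∀ n : ℕ, P (x₀ + n) := by
    intro n
    induction n with
    | zero => simpa using h₀
    | succ n ih => simpa [add_assoc] using hstep _ ih
  simpa using hP (y - x₀).val

theorem forall_of_imp_sub_one {P : ZMod f → Prop} (hstep : ∀ x, P x → P (x - 1)) {x₀ : ZMod f}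
    (h₀ : P x₀) (y : ZMod f) : P y := by
  have hneg : ∀ x, P (-x) → P (-(x + 1)) := fun x hx => by
    simpa [neg_add', sub_eq_add_neg, add_comm] using hstep _ hx
  simpa using forall_of_imp_add_one (P := fun x => P (-x)) hneg (x₀ := -x₀) (by simpa) (-y)

end ZMod

section Admissible

variable {f : ℕ} (p : ℕ) (c : ZMod f → ℕ) (S T : Finset (ZMod f))

/-- The conditions defining `PPS` imposed on the pair `(K ∆ S, K ∆ T)`: the principal series
family twisted by `J_base` is the case `S = T = J_base`, the cuspidal one `T = S ∆ {f - 1}`. -/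
def IsAdmissibleAt (K : Finset (ZMod f)) (j : ZMod f) : Prop :=
  (j ∈ K ∆ S → j - 1 ∉ K ∆ T → c j ≠ p - 1) ∧ (j ∉ K ∆ S → j - 1 ∈ K ∆ T → c j ≠ 0)

def IsAdmissible (K : Finset (ZMod f)) : Prop :=
  ∀ j, IsAdmissibleAt p c S T K j

/-- The condition at `j` is the implication `j ∈ K → j - 1 ∈ K`. -/
def RequiresPred (j : ZMod f) : Prop :=
  (c j = p - 1 ∧ j ∉ S ∧ j - 1 ∉ T) ∨ (c j = 0 ∧ j ∈ S ∧ j - 1 ∈ T)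

/-- The condition at `j` is the implication `j - 1 ∈ K → j ∈ K`. -/
def RequiredByPred (j : ZMod f) : Prop :=
  (c j = p - 1 ∧ j ∈ S ∧ j - 1 ∈ T) ∨ (c j = 0 ∧ j ∉ S ∧ j - 1 ∉ T)

variable {p c S T}

theorem isAdmissibleAt_congr {K K' : Finset (ZMod f)} {j : ZMod f} (h : j ∈ K ↔ j ∈ K')
    (h' : j - 1 ∈ K ↔ j - 1 ∈ K') : IsAdmissibleAt p c S T K j ↔ IsAdmissibleAt p c S T K' j := by
  simp only [IsAdmissibleAt, mem_symmDiff, h, h']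

theorem requiresPred_of_not_isAdmissibleAt {K : Finset (ZMod f)} {j : ZMod f}
    (h : ¬ IsAdmissibleAt p c S T K j) (hj : j ∈ K) (hj' : j - 1 ∉ K) :
    RequiresPred p c S T j := by
  simp only [IsAdmissibleAt, mem_symmDiff] at h
  unfold RequiresPred
  tauto

theorem requiredByPred_of_not_isAdmissibleAt {K : Finset (ZMod f)} {j : ZMod f}
    (h : ¬ IsAdmissibleAt p c S T K j) (hj : j ∉ K) (hj' : j - 1 ∈ K) :
    RequiredByPred p c S T j := by
  simp only [IsAdmissibleAt, mem_symmDiff] at h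
  unfold RequiredByPred
  tauto

theorem not_requiresPred_of_requiredByPred (hp : 1 < p) {j : ZMod f}
    (h : RequiredByPred p c S T j) : ¬ RequiresPred p c S T j := by
  unfold RequiredByPred at h
  unfold RequiresPred
  rcases h with ⟨hc, hS, -⟩ | ⟨hc, hS, -⟩ <;> rintro (⟨hc', hS', -⟩ | ⟨hc', hS', -⟩) <;>
    first | omega | contradiction

theorem neighbour_of_not_isAdmissible_insert {J J' : Finset (ZMod f)} (hJJ' : J ⊆ J')
    (hJ : IsAdmissible p c S T J) (hJ' : IsAdmissible p c S T J') {x : ZMod f} (hx : x ∈ J' \ J)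
    (hins : ¬ IsAdmissible p c S T (insert x J)) :
    (x - 1 ∈ J' \ J ∧ RequiresPred p c S T x) ∨
      (x + 1 ∈ J' \ J ∧ RequiredByPred p c S T (x + 1)) := by
  obtain ⟨hxJ', hxJ⟩ := mem_sdiff.mp hx
  have hsub : insert x J ⊆ J' := insert_subset hxJ' hJJ'
  have hsdiff : J' \ insert x J ⊆ J' \ J := sdiff_subset_sdiff subset_rfl (subset_insert x J)
  obtain ⟨j, hj⟩ := not_forall.mp hins
  have hJ'j : ¬ ((j ∈ insert x J ↔ j ∈ J') ∧ (j - 1 ∈ insert x J ↔ j - 1 ∈ J')) :=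
    fun h => hj ((isAdmissibleAt_congr h.1 h.2).mpr (hJ' j))
  have hjx : j = x ∨ j - 1 = x := by
    by_contra! hne
    exact hj ((isAdmissibleAt_congr (by simp [hne.1]) (by simp [hne.2])).mpr (hJ j))
  rcases hjx with rfl | hjx
  · have hj1 : j - 1 ∈ J' \ insert j J := mem_sdiff_of_not_mem_iff hsub
      fun h => hJ'j ⟨iff_of_true (mem_insert_self j J) hxJ', h⟩
    exact Or.inl ⟨hsdiff hj1,
      requiresPred_of_not_isAdmissibleAt hj (mem_insert_self j J) (mem_sdiff.mp hj1).2⟩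
  · obtain rfl : j = x + 1 := eq_add_of_sub_eq hjx
    have hj1 : x + 1 - 1 ∈ insert x J := by simp
    have hj' : x + 1 ∈ J' \ insert x J := mem_sdiff_of_not_mem_iff hsub
      fun h => hJ'j ⟨h, iff_of_true hj1 (hsub hj1)⟩
    exact Or.inr ⟨hsdiff hj', requiredByPred_of_not_isAdmissibleAt hj (mem_sdiff.mp hj').2 hj1⟩

theorem exists_isAdmissible_insert [NeZero f] (hp : 1 < p)
    (hsucc : ∃ j, ¬ RequiredByPred p c S T j) (hpred : ∃ j, ¬ RequiresPred p c S T j)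
    {J J' : Finset (ZMod f)} (hJJ' : J ⊂ J') (hJ : IsAdmissible p c S T J)
    (hJ' : IsAdmissible p c S T J') : ∃ x ∈ J' \ J, IsAdmissible p c S T (insert x J) := by
  by_contra! hblocked
  have hnb := fun x hx =>
    neighbour_of_not_isAdmissible_insert hJJ'.subset hJ hJ' hx (hblocked x hx)
  by_cases hright : ∃ x ∈ J' \ J, x + 1 ∈ J' \ J ∧ RequiredByPred p c S T (x + 1)
  · obtain ⟨x, -, hx⟩ := hright
    obtain ⟨j, hj⟩ := hsucc
    refine hj (ZMod.forall_of_imp_add_one (P := fun y => y ∈ J' \ J ∧ RequiredByPred p c S T y)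
      (fun y ⟨hy, hyR⟩ => ?_) hx j).2
    exact (hnb y hy).resolve_left fun h => not_requiresPred_of_requiredByPred hp hyR h.2
  · push Not at hright
    have hleft : ∀ x ∈ J' \ J, x - 1 ∈ J' \ J ∧ RequiresPred p c S T x :=
      fun x hx => (hnb x hx).resolve_right fun h => hright x hx h.1 h.2
    obtain ⟨x₀, hx₀⟩ := sdiff_nonempty.mpr (not_subset_of_ssubset hJJ')
    obtain ⟨j, hj⟩ := hpred
    exact hj (hleft j (ZMod.forall_of_imp_sub_one (fun x hx => (hleft x hx).1) hx₀ j)).2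

theorem mem_PPS_symmDiff_iff {K B : Finset (ZMod f)} :
    K ∆ B ∈ PPS p f c ↔ IsAdmissible p c B B K :=
  Iff.rfl

theorem mem_Pcusp_symmDiff_iff {K B : Finset (ZMod f)} :
    K ∆ B ∈ Pcusp p f c ↔ IsAdmissible p c B (B ∆ {-1}) K := by
  simp only [IsAdmissible, IsAdmissibleAt, ← symmDiff_assoc]
  rfl

theorem not_requiresPred_of_ne {j : ZMod f} (h0 : c j ≠ 0) (h1 : c j ≠ p - 1) :
    ¬ RequiresPred p c S T j := by
  simp [RequiresPred, h0, h1]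

theorem not_requiredByPred_of_ne {j : ZMod f} (h0 : c j ≠ 0) (h1 : c j ≠ p - 1) :
    ¬ RequiredByPred p c S T j := by
  simp [RequiredByPred, h0, h1]

end Admissible

theorem statement15_general (p f : ℕ) (hp : p.Prime) [NeZero f] (c : ZMod f → ℕ)
    (Pfam : Set (Finset (ZMod f))) (Jbase : Finset (ZMod f))
    (hcase :
      ((¬ ∀ j, c j = 0) ∧ (¬ ∀ j, c j = p - 1) ∧ Pfam = PPS p f c ∧ Jbase = ∅) ∨
      (∃ i : ZMod f, (0 < c i ∧ c i < p - 1) ∧ Pfam = Pcusp p f c ∧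
        Jbase = Finset.univ.filter fun j : ZMod f => i.val ≤ j.val))
    (J J' : Finset (ZMod f)) (hJJ' : J ⊆ J')
    (hJ : J ∆ Jbase ∈ Pfam) (hJ' : J' ∆ Jbase ∈ Pfam) :
    ∃ chain : ℕ → Finset (ZMod f),
      chain 0 = J ∧ chain (J'.card - J.card) = J' ∧
      (∀ m ≤ J'.card - J.card, (chain m).card = m + J.card ∧ chain m ∆ Jbase ∈ Pfam) ∧
      ∀ m < J'.card - J.card, chain m ⊂ chain (m + 1) := by
  obtain ⟨S, T, hsucc, hpred, hPfam⟩ : ∃ S T : Finset (ZMod f),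
      (∃ j, ¬ RequiredByPred p c S T j) ∧ (∃ j, ¬ RequiresPred p c S T j) ∧
      ∀ K : Finset (ZMod f), K ∆ Jbase ∈ Pfam ↔ IsAdmissible p c S T K := by
    rcases hcase with ⟨hc0, hc1, rfl, rfl⟩ | ⟨i, ⟨hi0, hi1⟩, rfl, -⟩
    · refine ⟨∅, ∅, ?_, ?_, fun K => mem_PPS_symmDiff_iff⟩
      · obtain ⟨j, hj⟩ := not_forall.mp hc0
        exact ⟨j, by simp [RequiredByPred, hj]⟩
      · obtain ⟨j, hj⟩ := not_forall.mp hc1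
        exact ⟨j, by simp [RequiresPred, hj]⟩
    · exact ⟨Jbase, Jbase ∆ {-1}, ⟨i, not_requiredByPred_of_ne (by omega) (by omega)⟩,
        ⟨i, not_requiresPred_of_ne (by omega) (by omega)⟩, fun K => mem_Pcusp_symmDiff_iff⟩
  refine exists_chain_of_exists_insert (· ∆ Jbase ∈ Pfam) (fun K K' hKK' hK hK' => ?_)
    hJJ' hJ hJ'
  simp only [hPfam] at hK hK' ⊢
  exact exists_isAdmissible_insert hp.one_lt hsucc hpred hKK' hK hK'

/-- In either the principal series case (with `J_base = ∅`) or the regular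
cuspidal case (with `J_base = {i, …, f-1}` for some `i` with `0 < c_i < p-1`), setting
`ι(J) := J ∆ J_base`: for any `J ⊆ J' ⊆ S` with `ι(J), ι(J') ∈ Pfam`, there is a chain
`J = J_0 ⊊ J_1 ⊊ ⋯ ⊊ J_{|J'|-|J|} = J'` with `|J_m| = m + |J|` and `ι(J_m) ∈ Pfam` for all `m`. -/
theorem statement15 (p f : ℕ) (hp : p.Prime) [NeZero f] (c : ZMod f → ℕ)
    (hc : ∀ j, c j ≤ p - 1)
    (Pfam : Set (Finset (ZMod f))) (Jbase : Finset (ZMod f))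
    (hcase :
      ((¬ ∀ j, c j = 0) ∧ (¬ ∀ j, c j = p - 1) ∧ Pfam = PPS p f c ∧ Jbase = ∅) ∨
      (∃ i : ZMod f, (0 < c i ∧ c i < p - 1) ∧ Pfam = Pcusp p f c ∧
        Jbase = Finset.univ.filter fun j : ZMod f => i.val ≤ j.val))
    (J J' : Finset (ZMod f)) (hJJ' : J ⊆ J')
    (hJ : J ∆ Jbase ∈ Pfam) (hJ' : J' ∆ Jbase ∈ Pfam) :
    ∃ chain : ℕ → Finset (ZMod f),
      chain 0 = J ∧ chain (J'.card - J.card) = J' ∧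
      (∀ m ≤ J'.card - J.card, (chain m).card = m + J.card ∧ chain m ∆ Jbase ∈ Pfam) ∧
      ∀ m < J'.card - J.card, chain m ⊂ chain (m + 1) :=
  statement15_general p f hp c Pfam Jbase hcase J J' hJJ' hJ hJ'
end

section
/- (1) There exists i ∈ S with 0 < c_i < p−1 if and only if there exists i ∈ S such that both {i, i+1, …, f−1} ∈ 𝒫^{cusp} and {0, 1, …, i−1} ∈ 𝒫^{cusp}. (2) If no i ∈ S satisfies 0 < c_i < p−1 (i.e. every c_i lies in {0, p−1}), then there is exactly one J ∈ 𝒫^{cusp} such that s_{J,i} ≠ p−1 for all i ∈ S, where s_{J,i} := p−1−c_i−δ_{(J_0)^c}(i−1) if i ∈ J and s_{J,i} := c_i−δ_{J_0}(i−1) if i ∉ J (δ_X the indicator function of X ⊆ S). -/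
/-!
For the interval `J = {i, …, f-1}` one has `j - 1 ∈ J₀ ↔ j ∈ J` for every `j ≠ i`, so the defining
condition of `𝒫^{cusp}` is vacuous away from `i` and reduces to `c_i ≠ p-1` at `i`; likewise
`{0, …, i-1}` lies in `𝒫^{cusp}` iff `c_i ≠ 0`. This gives (1).

If every digit is `0` or `p-1`, a check of the four cases shows that the condition at `i`
together with `s_{J,i} ≠ p-1` says exactly `i - 1 ∈ J₀ ↔ c_i = p-1`. Hence `J₀` is forced to be
`{j | c_{j+1} = p-1}`, and since `J ↦ J ∆ {f-1}` is an involution, exactly one `J` qualifies.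
-/

open scoped symmDiff

/-- The quantity `s_{J,i}`: `p - 1 - c_i - δ_{(J₀)ᶜ}(i-1)` if `i ∈ J`, and
`c_i - δ_{J₀}(i-1)` if `i ∉ J`, where `J₀ = J ∆ {f-1}`. -/
def sCusp (p : ℕ) {f : ℕ} (c : ZMod f → ℕ) (J : Finset (ZMod f)) (i : ZMod f) : ℤ :=
  if i ∈ J then
    (p : ℤ) - 1 - (c i : ℤ) - (if i - 1 ∈ J ∆ ({-1} : Finset (ZMod f)) then 0 else 1)
  else
    (c i : ℤ) - (if i - 1 ∈ J ∆ ({-1} : Finset (ZMod f)) then 1 else 0)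

open Finset

namespace ZMod

variable {n : ℕ} [NeZero n]

lemma val_neg_one_eq_sub_one : (-1 : ZMod n).val = n - 1 := by
  obtain ⟨m, rfl⟩ := Nat.exists_eq_succ_of_ne_zero (NeZero.ne n)
  exact val_neg_one m

lemma val_sub_one_of_ne_zero {j : ZMod n} (hj : j ≠ 0) : (j - 1).val = j.val - 1 := by
  have hpos : 0 < j.val := val_pos.2 hj
  have hone : (1 : ZMod n).val = 1 := by
    rw [val_one_eq_one_mod, Nat.mod_eq_of_lt (by have := val_lt j; omega)]
  rw [val_sub (by omega), hone]

end ZMod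

section Intervals

variable {f : ℕ} [NeZero f]

lemma sub_one_mem_filter_le_symmDiff_iff (i j : ZMod f) :
    j - 1 ∈ (univ.filter fun k : ZMod f => i.val ≤ k.val) ∆ {-1} ↔ i.val < j.val := by
  simp only [mem_symmDiff, mem_filter, mem_univ, true_and, mem_singleton, sub_eq_neg_self]
  by_cases hj : j = 0
  · subst hj
    simp only [zero_sub, ZMod.val_neg_one_eq_sub_one, ZMod.val_zero, not_true_eq_false, and_false,
      true_and, false_or, Nat.not_lt_zero, iff_false, not_not]
    exact Nat.le_sub_one_of_lt (ZMod.val_lt i)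
  · simp only [hj, ZMod.val_sub_one_of_ne_zero hj, not_false_eq_true, and_true, false_and,
      or_false]
    exact Nat.le_sub_one_iff_lt (ZMod.val_pos.2 hj)

lemma sub_one_mem_filter_lt_symmDiff_iff (i j : ZMod f) :
    j - 1 ∈ (univ.filter fun k : ZMod f => k.val < i.val) ∆ {-1} ↔ j.val ≤ i.val := by
  have := sub_one_mem_filter_le_symmDiff_iff i j
  simp only [mem_symmDiff, mem_filter, mem_univ, true_and, mem_singleton, ← not_lt] at this ⊢
  tauto

end Intervals

variable {p f : ℕ} {c : ZMod f → ℕ} {J : Finset (ZMod f)}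

lemma mem_Pcusp_iff_of_forall_ne {i : ZMod f}
    (h : ∀ j ≠ i, (j - 1 ∈ J ∆ {-1} ↔ j ∈ J)) :
    J ∈ Pcusp p f c ↔
      (i ∈ J → i - 1 ∉ J ∆ {-1} → c i ≠ p - 1) ∧ (i ∉ J → i - 1 ∈ J ∆ {-1} → c i ≠ 0) := by
  refine ⟨fun hJ => hJ i, fun hi j => ?_⟩
  by_cases hj : j = i
  · exact hj ▸ hi
  · have := h j hj
    tauto

lemma filter_le_mem_Pcusp_iff [NeZero f] (i : ZMod f) :
    (univ.filter fun j : ZMod f => i.val ≤ j.val) ∈ Pcusp p f c ↔ c i ≠ p - 1 := by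
  rw [mem_Pcusp_iff_of_forall_ne (i := i)]
  · simp [sub_one_mem_filter_le_symmDiff_iff]
  · intro j hj
    rw [sub_one_mem_filter_le_symmDiff_iff, mem_filter, lt_iff_le_and_ne]
    simp [(ZMod.val_injective f).ne (Ne.symm hj)]

lemma filter_lt_mem_Pcusp_iff [NeZero f] (i : ZMod f) :
    (univ.filter fun j : ZMod f => j.val < i.val) ∈ Pcusp p f c ↔ c i ≠ 0 := by
  rw [mem_Pcusp_iff_of_forall_ne (i := i)]
  · simp [sub_one_mem_filter_lt_symmDiff_iff]
  · intro j hj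
    rw [sub_one_mem_filter_lt_symmDiff_iff, mem_filter, le_iff_lt_or_eq]
    simp [(ZMod.val_injective f).ne hj]

lemma exists_digit_pos_lt_iff [NeZero f] (hc : ∀ i, c i ≤ p - 1) :
    (∃ i : ZMod f, 0 < c i ∧ c i < p - 1) ↔
      ∃ i : ZMod f, (univ.filter fun j : ZMod f => i.val ≤ j.val) ∈ Pcusp p f c ∧
        (univ.filter fun j : ZMod f => j.val < i.val) ∈ Pcusp p f c := by
  simp only [filter_le_mem_Pcusp_iff, filter_lt_mem_Pcusp_iff]
  exact exists_congr fun i => by have := hc i; omega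

lemma cusp_condition_and_sCusp_ne_iff (hp : 2 ≤ p) {i : ZMod f}
    (hci : c i = 0 ∨ c i = p - 1) :
    ((i ∈ J → i - 1 ∉ J ∆ {-1} → c i ≠ p - 1) ∧ (i ∉ J → i - 1 ∈ J ∆ {-1} → c i ≠ 0)) ∧
        sCusp p c J i ≠ (p : ℤ) - 1 ↔
      (i - 1 ∈ J ∆ {-1} ↔ c i = p - 1) := by
  unfold sCusp
  rcases hci with h | h <;> by_cases hi : i ∈ J <;> by_cases hi' : i - 1 ∈ J ∆ {-1} <;>
    simp [h, hi, hi'] <;> omega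

lemma mem_Pcusp_and_sCusp_ne_iff [NeZero f] (hp : 2 ≤ p) (hc : ∀ i, c i = 0 ∨ c i = p - 1) :
    (J ∈ Pcusp p f c ∧ ∀ i, sCusp p c J i ≠ (p : ℤ) - 1) ↔
      J ∆ {-1} = univ.filter fun j => c (j + 1) = p - 1 := by
  rw [Pcusp, Set.mem_ofPred_eq, ← forall_and]
  simp only [cusp_condition_and_sCusp_ne_iff hp (hc _), Finset.ext_iff, mem_filter, mem_univ,
    true_and]
  exact ⟨fun h j => by simpa using h (j + 1), fun h i => by simpa using h (i - 1)⟩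

/-- (1) There exists `i` with `0 < c_i < p-1` iff there exists `i` such that
both `{i, …, f-1}` and `{0, …, i-1}` lie in `𝒫^{cusp}`.  (2) If every `c_i ∈ {0, p-1}`, then
there is exactly one `J ∈ 𝒫^{cusp}` with `s_{J,i} ≠ p-1` for all `i`. -/
theorem statement16 (p f : ℕ) (hp : p.Prime) [NeZero f] (c : ZMod f → ℕ)
    (hc : ∀ i, c i ≤ p - 1) :
    ((∃ i : ZMod f, 0 < c i ∧ c i < p - 1) ↔
      (∃ i : ZMod f,
        (Finset.univ.filter fun j : ZMod f => i.val ≤ j.val) ∈ Pcusp p f c ∧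
        (Finset.univ.filter fun j : ZMod f => j.val < i.val) ∈ Pcusp p f c)) ∧
    ((∀ i : ZMod f, c i = 0 ∨ c i = p - 1) →
      ∃! J : Finset (ZMod f), J ∈ Pcusp p f c ∧
        ∀ i : ZMod f, sCusp p c J i ≠ (p : ℤ) - 1) :=
  ⟨exists_digit_pos_lt_iff hc, fun hc' =>
    (existsUnique_congr fun _ => mem_Pcusp_and_sCusp_ne_iff hp.two_le hc').2
      ((symmDiff_left_involutive _).bijective.existsUnique _)⟩
end

section
/- Let R be a commutative local ring, and let M'' ⊊ M' ⊆ M be R-modules (M'' a proper submodule of M', and M' a submodule of M). If M' is a cyclic R-module and M/M'' is a cyclic R-module, then M is a cyclic R-module. -/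
/-!
Write `M' = R x` and lift a generator of `M / M''` to `y`, so that `M = R y + M''`.
Then `x = r y + s x` with `s x ∈ M''`; since `M''` is a proper submodule of `R x`, `s` is not
a unit, hence `1 - s` is a unit in the local ring `R` and `x ∈ R y`. Therefore
`M'' ⊆ R x ⊆ R y` and `M = R y`.
-/

namespace Submodule

variable {R M : Type*} [CommRing R] [AddCommGroup M] [Module R M]

theorem span_singleton_sup_eq_top_of_span_mk_eq_top {N : Submodule R M} {y : M}
    (hy : span R {N.mkQ y} = ⊤) : span R {y} ⊔ N = ⊤ := by
  rw [sup_comm, ← map_mkQ_eq_top, map_span, Set.image_singleton, hy]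

theorem mem_of_mem_sup_of_lt_span_singleton [IsLocalRing R] {P N : Submodule R M} {x : M}
    (hN : N < span R {x}) (hx : x ∈ P ⊔ N) : x ∈ P := by
  obtain ⟨p, hp, n, hn, rfl⟩ := mem_sup.mp hx
  obtain ⟨s, hs⟩ := mem_span_singleton.mp (hN.le hn)
  have hs_nonunit : ¬ IsUnit s := fun hu =>
    hN.not_ge <| (span_singleton_le_iff_mem _ _).2 <|
      (smul_mem_iff_of_isUnit N hu).mp (by rwa [← hs] at hn)
  have hp_eq : (1 - s) • (p + n) = p := by
    rw [sub_smul, one_smul, hs, add_sub_cancel_right]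
  rw [← smul_mem_iff_of_isUnit P (IsLocalRing.isUnit_one_sub_self_of_mem_nonunits s hs_nonunit),
    hp_eq]
  exact hp

end Submodule

/-- Let `R` be a commutative local ring, and let `M'' ⊊ M' ⊆ M` be
`R`-modules.  If `M'` is a cyclic `R`-module and `M/M''` is a cyclic `R`-module, then `M` is
a cyclic `R`-module. -/
theorem statement17 {R : Type*} [CommRing R] [IsLocalRing R]
    {M : Type*} [AddCommGroup M] [Module R M]
    (M'' M' : Submodule R M) (hlt : M'' < M')
    (hM' : ∃ x : M, Submodule.span R {x} = M')
    (hQ : ∃ q : M ⧸ M'', Submodule.span R {q} = ⊤) :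
    ∃ m : M, Submodule.span R {m} = ⊤ := by
  obtain ⟨x, rfl⟩ := hM'
  obtain ⟨q, hq⟩ := hQ
  obtain ⟨y, rfl⟩ := Submodule.Quotient.mk_surjective M'' q
  have hsup : Submodule.span R {y} ⊔ M'' = ⊤ :=
    Submodule.span_singleton_sup_eq_top_of_span_mk_eq_top hq
  have hxy : x ∈ Submodule.span R {y} :=
    Submodule.mem_of_mem_sup_of_lt_span_singleton hlt (hsup ▸ Submodule.mem_top)
  have hM''_le : M'' ≤ Submodule.span R {y} :=
    hlt.le.trans ((Submodule.span_singleton_le_iff_mem x _).2 hxy)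
  exact ⟨y, by rw [← hsup, sup_eq_left.mpr hM''_le]⟩
end

section
/- Let J_1 ⊆ J_2 ⊆ T. Then: (1) I_{ℱ(J_1,J_2)} is the ideal of R generated by {X_j : j ∈ J_1} ∪ {Y_j : j ∈ T ∖ J_2}; (2) I_{ℱ(J_1,J_2)^×} = I_{ℱ(J_1,J_2)} + (∏_{j ∈ J_2∖J_1} X_j); (3) the R-module I_{ℱ(J_1,J_2)^×}/I_{ℱ(J_1,J_2)} is cyclic, generated by the image of the element ∏_{j ∈ J_2∖J_1} X_j, its annihilator is P_{J_1}, and it is isomorphic as an R-module to R/P_{J_1}. -/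
noncomputable section

namespace Stmt1819

variable (κ : Type) [Field κ] (T : Type) [Fintype T] [DecidableEq T] (m : ℕ)

/-- `κ⟦(X_j, Y_j)_{j ∈ T}⟧`, a power series ring with two families of variables `X_j, Y_j`. -/
abbrev Base : Type := MvPowerSeries (T ⊕ T) κ

/-- The ideal generated by the relations `X_j · Y_j`, `j ∈ T`. -/
def Rel : Ideal (Base κ T) :=
  Ideal.span (Set.range fun j : T =>
    (MvPowerSeries.X (Sum.inl j) * MvPowerSeries.X (Sum.inr j) : Base κ T))

/-- The ring `κ⟦(X_j, Y_j)_{j∈T}⟧/(X_j Y_j)_{j∈T}`. -/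
abbrev BRing : Type := Base κ T ⧸ Rel κ T

/-- The ring `R`: a formal power series ring in `m` further variables over
`κ⟦(X_j, Y_j)_{j∈T}⟧/(X_j Y_j)_{j∈T}`. -/
abbrev RRing : Type := MvPowerSeries (Fin m) (BRing κ T)

/-- The variable `X_j`, viewed in `R`. -/
def xvar (j : T) : RRing κ T m :=
  MvPowerSeries.C (σ := Fin m) (R := BRing κ T) (Ideal.Quotient.mk (Rel κ T) (MvPowerSeries.X (Sum.inl j)))

/-- The variable `Y_j`, viewed in `R`. -/
def yvar (j : T) : RRing κ T m :=
  MvPowerSeries.C (σ := Fin m) (R := BRing κ T) (Ideal.Quotient.mk (Rel κ T) (MvPowerSeries.X (Sum.inr j)))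

/-- The ideal `P_J` of `R`, generated by `{X_j : j ∈ J} ∪ {Y_j : j ∈ T \ J}`. -/
def Pideal (J : Finset T) : Ideal (RRing κ T m) :=
  Ideal.span ((xvar κ T m '' (J : Set T)) ∪ (yvar κ T m '' ((Jᶜ : Finset T) : Set T)))

/-- The ideal `I_𝒥 = ⋂_{J ∈ 𝒥} P_J` (with `I_∅ = R`, the unit ideal). -/
def Icoll (𝒥 : Set (Finset T)) : Ideal (RRing κ T m) := ⨅ J ∈ 𝒥, Pideal κ T m J

/-- The interval `ℱ(J₁, J₂) = {J : J₁ ⊆ J ⊆ J₂}`. -/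
def Fint (J₁ J₂ : Finset T) : Set (Finset T) := {J | J₁ ⊆ J ∧ J ⊆ J₂}

/-- The punctured interval `ℱ(J₁, J₂)^× = ℱ(J₁, J₂) \ {J₁}`. -/
def FintX (J₁ J₂ : Finset T) : Set (Finset T) := Fint T J₁ J₂ \ {J₁}

end Stmt1819

/-!
All ideals involved are extended from monomial ideals of the noetherian ring
`B = κ⟦X, Y⟧ ⧸ (X_j Y_j)`, so membership in `R = B⟦z⟧` is tested coefficientwise in `z`, and in `B`,
after lifting to `κ⟦X, Y⟧`, monomial by monomial. A monomial avoids `(X_j : j ∈ A, Y_j : j ∉ B)`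
exactly when it is standard for `(A, B)`: its `X`-support `x` misses `A`, its `Y`-support `y` lies
in `B`, and `x ∩ y = ∅`. Everything then reduces to the supports of one exponent. It is standard
for some `(J, J)` with `J ∈ ℱ(J₁, J₂)` iff it is standard for `(J₁, J₂)` (take `J = J₁ ∪ y`), and
for some `J ∈ ℱ(J₁, J₂)^×` iff moreover `J₂ ∖ J₁ ⊄ x` (add an index of `J₂ ∖ J₁` outside `x`).
Multiplying by `∏_{J₂ ∖ J₁} X_j` turns standardness for `(J₁, J₂)` into standardness for
`(J₁, J₁)`, which computes the colon ideal `(I_ℱ : ∏ X_j) = P_{J₁}`; the quotient is then the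
cyclic module `R ⧸ P_{J₁}`.
-/

namespace MvPowerSeries

variable {σ A : Type*} [CommRing A]

theorem mem_ideal_span_monomial_image {D : Finset (σ →₀ ℕ)} {f : MvPowerSeries σ A} :
    f ∈ Ideal.span ((monomial · (1 : A)) '' D) ↔ ∀ e, coeff e f ≠ 0 → ∃ d ∈ D, d ≤ e := by
  classical
  constructor
  · intro hf
    induction hf using Submodule.span_induction with
    | mem x hx =>
      obtain ⟨d, hd, rfl⟩ := hx
      intro e he
      exact ⟨d, hd, (eq_of_coeff_monomial_ne_zero he).ge⟩
    | zero => simp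
    | add x y _ _ hx hy =>
      intro e he
      by_cases hxe : coeff e x = 0
      · exact hy e (by simpa [hxe] using he)
      · exact hx e hxe
    | smul r x _ hx =>
      intro e he
      rw [smul_eq_mul, coeff_mul] at he
      obtain ⟨p, hp, hpe⟩ := Finset.exists_ne_zero_of_sum_ne_zero he
      obtain ⟨d, hd, hdp⟩ := hx p.2 (right_ne_zero_of_mul hpe)
      exact ⟨d, hd, hdp.trans ((Finset.HasAntidiagonal.mem_antidiagonal.mp hp) ▸ le_add_self)⟩
  · induction D using Finset.induction_on generalizing f with
    | empty =>
      intro hf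
      rw [show f = 0 from ext fun e => by simpa using hf e]
      exact zero_mem _
    | insert d D _ ih =>
      intro hf
      -- `f - g * X^d` has no monomial above `d`, so the induction hypothesis applies to it
      let g : MvPowerSeries σ A := fun e => coeff (e + d) f
      have hcoeff (e) : coeff e (g * monomial d 1) = if d ≤ e then coeff e f else 0 := by
        rw [coeff_mul_monomial]
        split_ifs with h
        · change coeff (e - d + d) f * 1 = _
          rw [tsub_add_cancel_of_le h, mul_one]
        · rfl
      have hrest : f - g * monomial d 1 ∈ Ideal.span ((monomial · (1 : A)) '' D) := by
        refine ih fun e he => ?_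
        rw [map_sub, hcoeff] at he
        split_ifs at he with h
        · simp at he
        · obtain ⟨d', hd', hle⟩ := hf e (by simpa using he)
          rcases Finset.mem_insert.mp hd' with rfl | hd'
          · exact absurd hle h
          · exact ⟨d', hd', hle⟩
      rw [← sub_add_cancel f (g * monomial d 1)]
      refine add_mem (Ideal.span_mono ?_ hrest)
        (Ideal.mul_mem_left _ _ (Ideal.subset_span ⟨d, by simp, rfl⟩))
      exact Set.image_mono (by simp)

theorem forall_coeff_mul_monomial_ne_zero_iff {f : MvPowerSeries σ A} {s : σ →₀ ℕ}
    {P : (σ →₀ ℕ) → Prop} :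
    (∀ e, coeff e (f * monomial s 1) ≠ 0 → P e) ↔ ∀ e, coeff e f ≠ 0 → P (e + s) := by
  refine ⟨fun h e he => h _ (by rwa [coeff_add_mul_monomial, mul_one]), fun h e he => ?_⟩
  rw [coeff_mul_monomial] at he
  split_ifs at he with hs
  · have := h (e - s) (by simpa using he)
    rwa [tsub_add_cancel_of_le hs] at this
  · exact absurd rfl he

theorem coeff_mem_of_mem_map_C {I : Ideal A} {f : MvPowerSeries σ A} (hf : f ∈ I.map C)
    (n : σ →₀ ℕ) : coeff n f ∈ I := by
  classical
  induction hf using Submodule.span_induction generalizing n with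
  | mem x hx =>
    obtain ⟨a, ha, rfl⟩ := hx
    rw [coeff_C]
    split_ifs
    exacts [ha, zero_mem _]
  | zero => simp
  | add x y _ _ hx hy => simpa using add_mem (hx n) (hy n)
  | smul r x _ hx =>
    rw [smul_eq_mul, coeff_mul]
    exact sum_mem fun p _ => I.mul_mem_left _ (hx p.2)

theorem mem_map_C_of_forall_coeff_mem {I : Ideal A} (hI : I.FG) {f : MvPowerSeries σ A}
    (hf : ∀ n, coeff n f ∈ I) : f ∈ I.map C := by
  classical
  obtain ⟨s, rfl⟩ := hI
  choose c _ hc using fun n => Submodule.mem_span_finset.mp (hf n)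
  let g (b : A) : MvPowerSeries σ A := fun n => c n b
  have hsum : f = ∑ b ∈ s, g b * C b := by
    ext n
    simp only [map_sum, coeff_mul_C, ← hc n]
    rfl
  rw [hsum]
  exact sum_mem fun b hb =>
    Ideal.mul_mem_left _ _ (Ideal.mem_map_of_mem _ (Ideal.subset_span hb))

theorem map_C_biInf {ι : Type*} (S : Set ι) (I : ι → Ideal A) (hI : (⨅ i ∈ S, I i).FG) :
    (⨅ i ∈ S, I i).map (C : A →+* MvPowerSeries σ A) = ⨅ i ∈ S, (I i).map C := by
  refine le_antisymm (le_iInf₂ fun i hi => Ideal.map_mono (iInf₂_le i hi)) fun f hf => ?_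
  refine mem_map_C_of_forall_coeff_mem hI fun n => ?_
  simp only [Submodule.mem_iInf] at hf ⊢
  exact fun i hi => coeff_mem_of_mem_map_C (hf i hi) n

theorem mul_C_mem_map_C_iff {I P : Ideal A} (hI : I.FG) (hP : P.FG) {b : A}
    (hb : ∀ a, a * b ∈ I ↔ a ∈ P) (f : MvPowerSeries σ A) :
    f * C b ∈ I.map C ↔ f ∈ P.map C := by
  refine ⟨fun hf => mem_map_C_of_forall_coeff_mem hP fun n => ?_,
    fun hf => mem_map_C_of_forall_coeff_mem hI fun n => ?_⟩
  · simpa [coeff_mul_C, hb] using coeff_mem_of_mem_map_C hf n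
  · simpa [coeff_mul_C, hb] using coeff_mem_of_mem_map_C hf n

end MvPowerSeries

namespace Ideal
variable {R : Type*} [CommRing R]

theorem map_mkQ_sup_span_singleton (I : Ideal R) (x : R) :
    Submodule.map I.mkQ (I ⊔ span {x}) = R ∙ I.mkQ x := by
  rw [Submodule.map_sup, ← submodule_span_eq, Submodule.map_span, Set.image_singleton,
    Submodule.mkQ_map_self, bot_sup_eq]

theorem torsionOf_mkQ_eq {I P : Ideal R} {x : R} (h : ∀ r, r * x ∈ I ↔ r ∈ P) :
    torsionOf R (R ⧸ I) (I.mkQ x) = P := by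
  ext r
  rw [mem_torsionOf_iff, ← map_smul, Submodule.mkQ_apply, Submodule.Quotient.mk_eq_zero,
    smul_eq_mul, h]

end Ideal

namespace Stmt1819

open Finset

section Exponents

variable {T : Type}

abbrev xExp (j : T) : T ⊕ T →₀ ℕ := Finsupp.single (.inl j) 1

abbrev yExp (j : T) : T ⊕ T →₀ ℕ := Finsupp.single (.inr j) 1

theorem sum_xExp_apply_inr (S : Finset T) (i : T) : (∑ j ∈ S, xExp j) (.inr i) = 0 := by
  simp [Finsupp.finsetSum_apply]

theorem sum_xExp_apply_inl [DecidableEq T] (S : Finset T) (i : T) :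
    (∑ j ∈ S, xExp j) (.inl i) = if i ∈ S then 1 else 0 := by
  simp only [Finsupp.finsetSum_apply, Finsupp.single_apply, Sum.inl.injEq, sum_ite_eq']

variable [Fintype T]

def xSupp (e : T ⊕ T →₀ ℕ) : Finset T := {j | e (.inl j) ≠ 0}

def ySupp (e : T ⊕ T →₀ ℕ) : Finset T := {j | e (.inr j) ≠ 0}

theorem ySupp_add_sum_xExp (e : T ⊕ T →₀ ℕ) (S : Finset T) :
    ySupp (e + ∑ j ∈ S, xExp j) = ySupp e := by
  ext i
  simp only [ySupp, mem_filter, mem_univ, true_and, Finsupp.add_apply, sum_xExp_apply_inr,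
    add_zero]

variable [DecidableEq T]

def relExps : Finset (T ⊕ T →₀ ℕ) := univ.image fun j => xExp j + yExp j

def varExps (A B : Finset T) : Finset (T ⊕ T →₀ ℕ) := A.image xExp ∪ Bᶜ.image yExp

def IsStandard (A B : Finset T) (e : T ⊕ T →₀ ℕ) : Prop :=
  Disjoint (xSupp e) A ∧ ySupp e ⊆ B ∧ Disjoint (xSupp e) (ySupp e)

theorem exists_le_iff_not_isStandard {A B : Finset T} {e : T ⊕ T →₀ ℕ} :
    (∃ d ∈ varExps A B ∪ relExps, d ≤ e) ↔ ¬IsStandard A B e := by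
  have hxy (j : T) : xExp j + yExp j ≤ e ↔ e (.inl j) ≠ 0 ∧ e (.inr j) ≠ 0 := by
    simp only [Finsupp.le_def, Finsupp.coe_add, Pi.add_apply, Finsupp.single_apply, Sum.forall,
      Sum.inl.injEq, Sum.inr.injEq, reduceCtorEq, if_false, add_zero, zero_add]
    grind
  simp only [varExps, relExps, mem_union, mem_image, or_and_right, exists_or,
    exists_exists_and_eq_and, exists_exists_eq_and, mem_univ, true_and, hxy,
    Finsupp.single_le_iff, Nat.one_le_iff_ne_zero, IsStandard, xSupp, ySupp, disjoint_left,
    subset_iff, mem_filter, mem_compl]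
  grind

theorem sum_xExp_le_iff {S : Finset T} {e : T ⊕ T →₀ ℕ} :
    ∑ j ∈ S, xExp j ≤ e ↔ S ⊆ xSupp e := by
  simp only [Finsupp.le_def, Sum.forall, sum_xExp_apply_inl, sum_xExp_apply_inr, zero_le,
    implies_true, and_true, subset_iff, xSupp, mem_filter, mem_univ, true_and]
  grind

theorem xSupp_add_sum_xExp (e : T ⊕ T →₀ ℕ) (S : Finset T) :
    xSupp (e + ∑ j ∈ S, xExp j) = xSupp e ∪ S := by
  ext i
  simp only [xSupp, mem_filter, mem_univ, true_and, mem_union, Finsupp.add_apply,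
    sum_xExp_apply_inl]
  grind

variable {J₁ J₂ : Finset T} {e : T ⊕ T →₀ ℕ}

theorem isStandard_iff_exists_mem_Fint (h12 : J₁ ⊆ J₂) :
    IsStandard J₁ J₂ e ↔ ∃ J ∈ Fint T J₁ J₂, IsStandard J J e := by
  constructor
  · rintro ⟨hx, hy, hxy⟩
    exact ⟨J₁ ∪ ySupp e, ⟨subset_union_left, union_subset h12 hy⟩,
      disjoint_union_right.mpr ⟨hx, hxy⟩, subset_union_right, hxy⟩
  · rintro ⟨J, ⟨h1, h2⟩, hx, hy, hxy⟩
    exact ⟨hx.mono_right h1, hy.trans h2, hxy⟩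

theorem isStandard_and_not_subset_iff_exists_mem_FintX (h12 : J₁ ⊆ J₂) :
    IsStandard J₁ J₂ e ∧ ¬J₂ \ J₁ ⊆ xSupp e ↔ ∃ J ∈ FintX T J₁ J₂, IsStandard J J e := by
  constructor
  · rintro ⟨⟨hx, hy, hxy⟩, hS⟩
    obtain ⟨i, hi, hix⟩ := not_subset.mp hS
    rw [mem_sdiff] at hi
    refine ⟨insert i (J₁ ∪ ySupp e), ⟨⟨?_, ?_⟩, ?_⟩, ?_, ?_, hxy⟩
    · exact subset_union_left.trans (subset_insert _ _)
    · exact insert_subset hi.1 (union_subset h12 hy)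
    · exact fun h => hi.2 (h ▸ mem_insert_self i _)
    · exact disjoint_insert_right.mpr ⟨hix, disjoint_union_right.mpr ⟨hx, hxy⟩⟩
    · exact subset_union_right.trans (subset_insert _ _)
  · rintro ⟨J, ⟨⟨h1, h2⟩, hne⟩, hx, hy, hxy⟩
    refine ⟨⟨hx.mono_right h1, hy.trans h2, hxy⟩, fun hS => hne (Subset.antisymm ?_ h1)⟩
    exact fun i hi => by_contra fun hi₁ =>
      disjoint_left.mp hx (hS (mem_sdiff.mpr ⟨h2 hi, hi₁⟩)) hi

theorem isStandard_add_sum_xExp_iff (h12 : J₁ ⊆ J₂) :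
    IsStandard J₁ J₂ (e + ∑ j ∈ J₂ \ J₁, xExp j) ↔ IsStandard J₁ J₁ e := by
  simp only [IsStandard, xSupp_add_sum_xExp, ySupp_add_sum_xExp, disjoint_left, subset_iff]
  grind

end Exponents

section QuotientRing

open MvPowerSeries

variable (κ : Type) [Field κ] {T : Type}

def quotMonomial (d : T ⊕ T →₀ ℕ) : BRing κ T := Ideal.Quotient.mk (Rel κ T) (monomial d 1)

variable [Fintype T] [DecidableEq T]

theorem Rel_eq_span_monomial :
    Rel κ T = Ideal.span ((monomial · (1 : κ)) '' ((relExps : Finset (T ⊕ T →₀ ℕ)) : Set _)) := by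
  rw [Rel, relExps, coe_image, coe_univ, Set.image_univ, ← Set.range_comp]
  congr! with j
  simp [X, monomial_mul_monomial]

theorem mk_mem_span_quotMonomial_iff (D : Finset (T ⊕ T →₀ ℕ)) (a : Base κ T) :
    Ideal.Quotient.mk (Rel κ T) a ∈ Ideal.span (quotMonomial κ '' ↑D) ↔
      ∀ e, coeff e a ≠ 0 → ∃ d ∈ D ∪ relExps, d ≤ e := by
  have hspan : Ideal.span (quotMonomial κ '' ↑D) =
      (Ideal.span ((monomial · (1 : κ)) '' ↑D)).map (Ideal.Quotient.mk (Rel κ T)) := by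
    rw [Ideal.map_span, Set.image_image]
    rfl
  rw [hspan, Ideal.mem_quotient_iff_mem_sup, Rel_eq_span_monomial, ← Ideal.span_union,
    ← Set.image_union, ← coe_union, mem_ideal_span_monomial_image]

def varIdeal (A B : Finset T) : Ideal (BRing κ T) :=
  Ideal.span (quotMonomial κ '' ↑(varExps A B))

theorem mk_mem_varIdeal_iff (A B : Finset T) (a : Base κ T) :
    Ideal.Quotient.mk (Rel κ T) a ∈ varIdeal κ A B ↔
      ∀ e, coeff e a ≠ 0 → ¬IsStandard A B e := by
  simp only [varIdeal, mk_mem_span_quotMonomial_iff, exists_le_iff_not_isStandard]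

variable {κ} {J₁ J₂ : Finset T}

theorem biInf_varIdeal_Fint (h12 : J₁ ⊆ J₂) :
    ⨅ J ∈ Fint T J₁ J₂, varIdeal κ J J = varIdeal κ J₁ J₂ := by
  ext b
  obtain ⟨a, rfl⟩ := Ideal.Quotient.mk_surjective b
  simp only [Submodule.mem_iInf, mk_mem_varIdeal_iff, isStandard_iff_exists_mem_Fint h12]
  grind

theorem biInf_varIdeal_FintX (h12 : J₁ ⊆ J₂) :
    ⨅ J ∈ FintX T J₁ J₂, varIdeal κ J J =
      varIdeal κ J₁ J₂ ⊔ Ideal.span {quotMonomial κ (∑ j ∈ J₂ \ J₁, xExp j)} := by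
  rw [varIdeal, ← Ideal.span_union, ← Set.image_singleton, ← Set.image_union,
    ← coe_singleton, ← coe_union]
  ext b
  obtain ⟨a, rfl⟩ := Ideal.Quotient.mk_surjective b
  have hexp (e : T ⊕ T →₀ ℕ) :
      (∃ d ∈ varExps J₁ J₂ ∪ {∑ j ∈ J₂ \ J₁, xExp j} ∪ relExps, d ≤ e) ↔
        ¬∃ J ∈ FintX T J₁ J₂, IsStandard J J e := by
    rw [← isStandard_and_not_subset_iff_exists_mem_FintX h12, ← sum_xExp_le_iff, not_and_or,
      not_not, ← exists_le_iff_not_isStandard, union_right_comm, union_comm _ {_}, ← insert_eq,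
      exists_mem_insert, or_comm]
  simp only [Submodule.mem_iInf, mk_mem_varIdeal_iff, mk_mem_span_quotMonomial_iff, hexp]
  grind

theorem mul_quotMonomial_mem_varIdeal_iff (h12 : J₁ ⊆ J₂) (b : BRing κ T) :
    b * quotMonomial κ (∑ j ∈ J₂ \ J₁, xExp j) ∈ varIdeal κ J₁ J₂ ↔ b ∈ varIdeal κ J₁ J₁ := by
  obtain ⟨a, rfl⟩ := Ideal.Quotient.mk_surjective b
  rw [quotMonomial, ← map_mul, mk_mem_varIdeal_iff, mk_mem_varIdeal_iff,
    forall_coeff_mul_monomial_ne_zero_iff]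
  simp only [isStandard_add_sum_xExp_iff h12]

end QuotientRing

section PowerSeriesRing

open MvPowerSeries

variable (κ : Type) [Field κ] {T : Type} (m : ℕ)

theorem prod_xvar (S : Finset T) :
    ∏ j ∈ S, xvar κ T m j = C (quotMonomial κ (∑ j ∈ S, xExp j)) := by
  simp only [xvar, X_def, quotMonomial, ← map_prod, prod_monomial, prod_const_one]

variable [Fintype T] [DecidableEq T]

theorem span_vars_eq_map_varIdeal (A B : Finset T) :
    Ideal.span (xvar κ T m '' ↑A ∪ yvar κ T m '' ↑Bᶜ) = (varIdeal κ A B).map C := by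
  simp only [varIdeal, Ideal.map_span, varExps, coe_union, coe_image, Set.image_union,
    Set.image_image]
  rfl

theorem Pideal_eq_map_varIdeal (J : Finset T) : Pideal κ T m J = (varIdeal κ J J).map C :=
  span_vars_eq_map_varIdeal κ m J J

theorem Icoll_eq_map_biInf (𝒥 : Set (Finset T)) :
    Icoll κ T m 𝒥 = (⨅ J ∈ 𝒥, varIdeal κ J J).map C := by
  rw [map_C_biInf _ _ (IsNoetherian.noetherian _), Icoll]
  simp only [Pideal_eq_map_varIdeal]

end PowerSeriesRing

end Stmt1819

open Stmt1819 in
/-- For `J₁ ⊆ J₂ ⊆ T`: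
(1) `I_{ℱ(J₁,J₂)}` is generated by `{X_j : j ∈ J₁} ∪ {Y_j : j ∈ T∖J₂}`;
(2) `I_{ℱ(J₁,J₂)^×} = I_{ℱ(J₁,J₂)} + (∏_{j ∈ J₂∖J₁} X_j)`;
(3) the `R`-module `I_{ℱ(J₁,J₂)^×}/I_{ℱ(J₁,J₂)}` (realized as the image of `I_{ℱ(J₁,J₂)^×}`
in `R/I_{ℱ(J₁,J₂)}`) is cyclic, generated by the image of `∏_{j∈J₂∖J₁} X_j`, its annihilator
is `P_{J₁}`, and it is isomorphic to `R/P_{J₁}` as an `R`-module. -/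
theorem statement18 (κ : Type) [Field κ] (T : Type) [Fintype T] [DecidableEq T] (m : ℕ)
    (J₁ J₂ : Finset T) (h12 : J₁ ⊆ J₂) :
    Icoll κ T m (Fint T J₁ J₂) =
      Ideal.span ((xvar κ T m '' (J₁ : Set T)) ∪ (yvar κ T m '' ((J₂ᶜ : Finset T) : Set T))) ∧
    Icoll κ T m (FintX T J₁ J₂) =
      Icoll κ T m (Fint T J₁ J₂) + Ideal.span {∏ j ∈ J₂ \ J₁, xvar κ T m j} ∧
    Submodule.map (Icoll κ T m (Fint T J₁ J₂)).mkQ (Icoll κ T m (FintX T J₁ J₂)) =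
      Submodule.span (RRing κ T m)
        {(Icoll κ T m (Fint T J₁ J₂)).mkQ (∏ j ∈ J₂ \ J₁, xvar κ T m j)} ∧
    Module.annihilator (RRing κ T m)
        ↥(Submodule.map (Icoll κ T m (Fint T J₁ J₂)).mkQ (Icoll κ T m (FintX T J₁ J₂))) =
      Pideal κ T m J₁ ∧
    Nonempty (↥(Submodule.map (Icoll κ T m (Fint T J₁ J₂)).mkQ (Icoll κ T m (FintX T J₁ J₂)))
      ≃ₗ[RRing κ T m] (RRing κ T m ⧸ Pideal κ T m J₁)) := by
  have hF : Icoll κ T m (Fint T J₁ J₂) = (varIdeal κ J₁ J₂).map MvPowerSeries.C := by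
    rw [Icoll_eq_map_biInf, biInf_varIdeal_Fint h12]
  have hFX : Icoll κ T m (FintX T J₁ J₂) =
      Icoll κ T m (Fint T J₁ J₂) + Ideal.span {∏ j ∈ J₂ \ J₁, xvar κ T m j} := by
    rw [Icoll_eq_map_biInf, biInf_varIdeal_FintX h12, Ideal.map_sup, Ideal.map_span,
      Set.image_singleton, hF, prod_xvar, Submodule.add_eq_sup]
  have hcolon (r : RRing κ T m) :
      r * ∏ j ∈ J₂ \ J₁, xvar κ T m j ∈ Icoll κ T m (Fint T J₁ J₂) ↔ r ∈ Pideal κ T m J₁ := by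
    rw [hF, prod_xvar, Pideal_eq_map_varIdeal]
    exact MvPowerSeries.mul_C_mem_map_C_iff (IsNoetherian.noetherian _)
      (IsNoetherian.noetherian _) (mul_quotMonomial_mem_varIdeal_iff h12) r
  have hcyclic : Submodule.map (Icoll κ T m (Fint T J₁ J₂)).mkQ (Icoll κ T m (FintX T J₁ J₂)) =
      Submodule.span _ {(Icoll κ T m (Fint T J₁ J₂)).mkQ (∏ j ∈ J₂ \ J₁, xvar κ T m j)} := by
    rw [hFX, Submodule.add_eq_sup, Ideal.map_mkQ_sup_span_singleton]
  have htorsion := Ideal.torsionOf_mkQ_eq hcolon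
  refine ⟨hF.trans (span_vars_eq_map_varIdeal κ m J₁ J₂).symm, hFX, hcyclic, ?_, ?_⟩
  · rw [hcyclic, ← Submodule.annihilator, Ideal.annihilator_span_singleton_eq_torsionOf,
      htorsion]
  · rw [hcyclic]
    exact ⟨(Submodule.quotEquivOfEq _ _ htorsion.symm ≪≫ₗ
      Ideal.quotTorsionOfEquivSpanSingleton _ _ _).symm⟩
end
end

section
/- If 𝒥_1 and 𝒥_2 are two capped intervals of subsets of T that share a common cap, then I_{𝒥_1} + I_{𝒥_2} = I_{𝒥_1 ∩ 𝒥_2}. -/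
noncomputable section

/-!
`P_J` is the ideal of power series whose coefficients lie in the image of the ideal `q_J`
(`basePrime`) of `κ⟦X, Y⟧` generated by the variables `X_j` (`j ∈ J`) and `Y_j` (`j ∉ J`); since
`q_J` contains every relation `X_j Y_j`, the claim reduces to one about these ideals of `κ⟦X, Y⟧`.
There, membership is read off monomial by monomial: `a ∈ q_J` iff every monomial occurring in `a`
involves one of the generating variables. Given `a ∈ q_J` for all `J ∈ 𝒥₁ ∩ 𝒥₂`, split `a` into
the monomials meeting the variables of every `J ∈ 𝒥₁` (a series in `⋂_{𝒥₁} q_J`) and the rest. A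
remaining monomial avoids the variables of some `J₁ ∈ 𝒥₁`; if it also avoided those of some
`J₂ ∈ 𝒥₂`, it would avoid those of `J₁ ∪ J₂`, which lies in `𝒥₁ ∩ 𝒥₂` because both intervals reach
up to the common cap, so its coefficient vanishes. Hence the rest lies in `⋂_{𝒥₂} q_J`.
-/

namespace MvPowerSeries

variable {σ R : Type*} [CommSemiring R]

variable (σ) in
def coeffIdeal (I : Ideal R) : Ideal (MvPowerSeries σ R) where
  carrier := {f | ∀ e, coeff e f ∈ I}
  add_mem' hf hg e := by simpa only [map_add] using I.add_mem (hf e) (hg e)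
  zero_mem' e := by simp
  smul_mem' c f hf e := by
    classical
    rw [smul_eq_mul, coeff_mul]
    exact sum_mem fun p _ => I.mul_mem_left _ (hf p.2)

@[simp]
theorem mem_coeffIdeal {I : Ideal R} {f : MvPowerSeries σ R} :
    f ∈ coeffIdeal σ I ↔ ∀ e, coeff e f ∈ I :=
  Iff.rfl

theorem coeffIdeal_iInf {ι : Sort*} (I : ι → Ideal R) :
    coeffIdeal σ (⨅ i, I i) = ⨅ i, coeffIdeal σ (I i) := by
  ext f
  simp only [mem_coeffIdeal, Submodule.mem_iInf]
  exact forall_comm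

theorem coeffIdeal_sup (I J : Ideal R) :
    coeffIdeal σ (I ⊔ J) = coeffIdeal σ I ⊔ coeffIdeal σ J := by
  refine le_antisymm (fun f hf => ?_) (sup_le (fun f hf e => Ideal.mem_sup_left (hf e))
    (fun f hf e => Ideal.mem_sup_right (hf e)))
  choose a ha b hb hab using fun e => Submodule.mem_sup.mp (hf e)
  have hsplit : f = (a : MvPowerSeries σ R) + b := by
    ext e
    exact (hab e).symm
  rw [hsplit]
  exact Submodule.add_mem_sup ha hb

theorem map_C_eq_coeffIdeal {I : Ideal R} (hI : I.FG) : I.map C = coeffIdeal σ I := by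
  classical
  obtain ⟨G, rfl⟩ := hI
  rw [Ideal.map_span]
  refine le_antisymm (Ideal.span_le.mpr ?_) fun f hf => ?_
  · rintro _ ⟨g, hg, rfl⟩ e
    rw [coeff_C]
    split_ifs
    exacts [Ideal.subset_span hg, zero_mem _]
  · choose c hc using fun e => (Submodule.mem_span_finset.mp (hf e)).imp fun _ => And.right
    let F : R → MvPowerSeries σ R := fun g e => c e g
    have hsum : f = ∑ g ∈ G, C g * F g := by
      ext e
      simp only [map_sum, coeff_C_mul, ← hc e, smul_eq_mul, mul_comm]
      rfl
    rw [hsum]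
    exact sum_mem fun g hg => Ideal.mul_mem_right _ _ (Ideal.subset_span ⟨g, hg, rfl⟩)

def indicator (s : Set (σ →₀ ℕ)) (f : MvPowerSeries σ R) : MvPowerSeries σ R :=
  s.indicator fun e => coeff e f

theorem coeff_indicator (s : Set (σ →₀ ℕ)) (f : MvPowerSeries σ R) (e : σ →₀ ℕ) :
    coeff e (indicator s f) = s.indicator (fun e => coeff e f) e :=
  rfl

theorem indicator_add_indicator_compl (s : Set (σ →₀ ℕ)) (f : MvPowerSeries σ R) :
    indicator s f + indicator sᶜ f = f := by
  ext e
  rw [map_add, coeff_indicator, coeff_indicator, Set.indicator_self_add_compl_apply]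

theorem mem_span_X_image_iff (S : Finset σ) {f : MvPowerSeries σ R} :
    f ∈ Ideal.span ((X : σ → MvPowerSeries σ R) '' S) ↔
      ∀ e : σ →₀ ℕ, Disjoint e.support S → coeff e f = 0 := by
  classical
  constructor
  · intro hf e he
    obtain ⟨c, rfl⟩ := (Submodule.mem_span_image_finset_iff_exists_fun' _).mp hf
    rw [map_sum]
    refine Finset.sum_eq_zero fun i hi => X_dvd_iff.mp (dvd_mul_left _ _) e ?_
    exact Finsupp.notMem_support_iff.mp (Finset.disjoint_right.mp he hi)
  · induction S using Finset.induction_on generalizing f with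
    | empty =>
      intro hf
      rw [show f = 0 from ext fun e => hf e (Finset.disjoint_empty_right _)]
      exact zero_mem _
    | insert s S _ ih =>
      intro hf
      have hS : (X : σ → MvPowerSeries σ R) '' S ⊆ X '' ↑(insert s S) :=
        Set.image_mono (Finset.coe_subset.mpr (Finset.subset_insert s S))
      rw [← indicator_add_indicator_compl {e | e s = 0} f]
      refine add_mem (Ideal.span_mono hS (ih fun e he => ?_)) ?_
      · rw [coeff_indicator, Set.indicator_apply]
        split_ifs with hes
        · exact hf e <|
            Finset.disjoint_insert_right.mpr ⟨Finsupp.notMem_support_iff.mpr hes, he⟩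
        · rfl
      · obtain ⟨g, hg⟩ : X s ∣ indicator {e | e s = 0}ᶜ f := X_dvd_iff.mpr fun e hes => by
          rw [coeff_indicator, Set.indicator_of_notMem (not_not_intro hes)]
        rw [hg]
        exact Ideal.mul_mem_right _ _ (Ideal.subset_span ⟨s, Finset.mem_insert_self s S, rfl⟩)

theorem iInf_span_X_image_inter_le_sup [DecidableEq σ] {ι : Type*} (V : ι → Finset σ)
    {A B : Set ι}
    (h : ∀ i ∈ A, ∀ j ∈ B, ∃ k ∈ A ∩ B, V k ⊆ V i ∪ V j) :
    ⨅ k ∈ A ∩ B, Ideal.span ((X : σ → MvPowerSeries σ R) '' V k) ≤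
      (⨅ i ∈ A, Ideal.span (X '' (V i : Set σ))) ⊔
        ⨅ j ∈ B, Ideal.span (X '' (V j : Set σ)) := by
  intro f hf
  simp only [Submodule.mem_iInf, mem_span_X_image_iff] at hf
  set s : Set (σ →₀ ℕ) := {e | ∀ i ∈ A, ¬Disjoint e.support (V i)}
  rw [← indicator_add_indicator_compl s f]
  refine Submodule.add_mem_sup ?_ ?_ <;>
    simp only [Submodule.mem_iInf, mem_span_X_image_iff, coeff_indicator]
  · exact fun i hi e he =>
      Set.indicator_of_notMem (fun (hs : ∀ i ∈ A, ¬Disjoint e.support (V i)) => hs i hi he) _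
  · intro j hj e he
    by_cases hs : e ∈ s
    · exact Set.indicator_of_notMem (not_not_intro hs) _
    · rw [Set.indicator_of_mem hs]
      obtain ⟨i, hi, hei⟩ : ∃ i ∈ A, Disjoint e.support (V i) := by
        simpa [s] using hs
      obtain ⟨k, hk, hV⟩ := h i hi j hj
      exact hf k hk e ((Finset.disjoint_union_right.mpr ⟨hei, he⟩).mono_right hV)

end MvPowerSeries

namespace Stmt1819

open MvPowerSeries

variable (κ : Type) [Field κ] {T : Type} [Fintype T] [DecidableEq T] (m : ℕ)

def primeVars (J : Finset T) : Finset (T ⊕ T) := J.disjSum Jᶜ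

theorem primeVars_union_subset (J₁ J₂ : Finset T) :
    primeVars (J₁ ∪ J₂) ⊆ primeVars J₁ ∪ primeVars J₂ := by
  rintro (j | j) <;> simp_all [primeVars]

def basePrime (J : Finset T) : Ideal (Base κ T) := Ideal.span (X '' ↑(primeVars J))

theorem rel_le_basePrime (J : Finset T) : Rel κ T ≤ basePrime κ J := by
  rw [Rel, Ideal.span_le]
  rintro _ ⟨j, rfl⟩
  by_cases hj : j ∈ J
  · exact Ideal.mul_mem_right _ _ (Ideal.subset_span ⟨.inl j, by simp [primeVars, hj], rfl⟩)
  · exact Ideal.mul_mem_left _ _ (Ideal.subset_span ⟨.inr j, by simp [primeVars, hj], rfl⟩)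

theorem Pideal_eq_coeffIdeal (J : Finset T) :
    Pideal κ T m J = coeffIdeal (Fin m) ((basePrime κ J).map (Ideal.Quotient.mk (Rel κ T))) := by
  have hfg : ((basePrime κ J).map (Ideal.Quotient.mk (Rel κ T))).FG :=
    Ideal.FG.map (Submodule.fg_span ((primeVars J).finite_toSet.image _)) _
  rw [← map_C_eq_coeffIdeal hfg, basePrime, Ideal.map_span, Ideal.map_span, Pideal]
  congr 1
  ext x
  simp [primeVars, xvar, yvar, Finset.mem_disjSum, or_and_right, exists_or]

theorem Icoll_eq_coeffIdeal (𝒥 : Set (Finset T)) :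
    Icoll κ T m 𝒥 =
      coeffIdeal (Fin m) (⨅ J ∈ 𝒥, (basePrime κ J).map (Ideal.Quotient.mk (Rel κ T))) := by
  simp only [Icoll, Pideal_eq_coeffIdeal, coeffIdeal_iInf]

theorem iInf_map_basePrime_inter_le_sup {𝒥₁ 𝒥₂ : Set (Finset T)}
    (h : ∀ J₁ ∈ 𝒥₁, ∀ J₂ ∈ 𝒥₂, J₁ ∪ J₂ ∈ 𝒥₁ ∩ 𝒥₂) :
    ⨅ J ∈ 𝒥₁ ∩ 𝒥₂, (basePrime κ J).map (Ideal.Quotient.mk (Rel κ T)) ≤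
      (⨅ J ∈ 𝒥₁, (basePrime κ J).map (Ideal.Quotient.mk (Rel κ T))) ⊔
        ⨅ J ∈ 𝒥₂, (basePrime κ J).map (Ideal.Quotient.mk (Rel κ T)) := by
  have hcomap (J : Finset T) :
      ((basePrime κ J).map (Ideal.Quotient.mk (Rel κ T))).comap (Ideal.Quotient.mk (Rel κ T)) =
        basePrime κ J := by
    rw [Ideal.comap_map_of_surjective _ Ideal.Quotient.mk_surjective, ← RingHom.ker_eq_comap_bot,
      Ideal.mk_ker, sup_eq_left.mpr (rel_le_basePrime κ J)]
  rw [← Ideal.comap_le_comap_iff_of_surjective _ Ideal.Quotient.mk_surjective]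
  refine le_trans ?_ (Ideal.le_comap_sup _)
  simp only [Ideal.comap_iInf, hcomap]
  exact iInf_span_X_image_inter_le_sup primeVars fun J₁ h₁ J₂ h₂ =>
    ⟨J₁ ∪ J₂, h J₁ h₁ J₂ h₂, primeVars_union_subset J₁ J₂⟩

end Stmt1819

open Stmt1819 in
/-- If `𝒥₁` and `𝒥₂` are two capped intervals of subsets of `T` sharing a
common cap, then `I_{𝒥₁} + I_{𝒥₂} = I_{𝒥₁ ∩ 𝒥₂}`. -/
theorem statement19 (κ : Type) [Field κ] (T : Type) [Fintype T] [DecidableEq T] (m : ℕ)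
    (𝒥₁ 𝒥₂ : Set (Finset T)) (cap : Finset T)
    (h₁int : ∀ ⦃Ja Jb J' : Finset T⦄, Ja ∈ 𝒥₁ → Jb ∈ 𝒥₁ → Ja ⊆ J' → J' ⊆ Jb → J' ∈ 𝒥₁)
    (h₂int : ∀ ⦃Ja Jb J' : Finset T⦄, Ja ∈ 𝒥₂ → Jb ∈ 𝒥₂ → Ja ⊆ J' → J' ⊆ Jb → J' ∈ 𝒥₂)
    (h₁cap : cap ∈ 𝒥₁ ∧ ∀ J ∈ 𝒥₁, J ⊆ cap)
    (h₂cap : cap ∈ 𝒥₂ ∧ ∀ J ∈ 𝒥₂, J ⊆ cap) :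
    Icoll κ T m 𝒥₁ + Icoll κ T m 𝒥₂ = Icoll κ T m (𝒥₁ ∩ 𝒥₂) := by
  have hunion : ∀ J₁ ∈ 𝒥₁, ∀ J₂ ∈ 𝒥₂, J₁ ∪ J₂ ∈ 𝒥₁ ∩ 𝒥₂ := fun J₁ hJ₁ J₂ hJ₂ => by
    have hcap : J₁ ∪ J₂ ⊆ cap := Finset.union_subset (h₁cap.2 J₁ hJ₁) (h₂cap.2 J₂ hJ₂)
    exact ⟨h₁int hJ₁ h₁cap.1 Finset.subset_union_left hcap,
      h₂int hJ₂ h₂cap.1 Finset.subset_union_right hcap⟩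
  rw [Icoll_eq_coeffIdeal, Icoll_eq_coeffIdeal, Icoll_eq_coeffIdeal, Submodule.add_eq_sup,
    ← MvPowerSeries.coeffIdeal_sup]
  refine congrArg _ (le_antisymm ?_ (iInf_map_basePrime_inter_le_sup κ hunion))
  exact sup_le (biInf_mono fun _ => And.left) (biInf_mono fun _ => And.right)
end
end
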